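/- arXiv:2303.13341 — 4 statements merged into one kernel-verified Lean document; each statement's English description precedes it below -/
import Mathlib

section
/- For N = 4 with all multiplicities 1, basis v_1,v_2,v_3,v_4 of ℝ^4, splittings V_i = span(v_i) and W_i = span(w_i) where w_1 = v_1+v_2+v_3+v_4, w_2 = v_2+v_3+v_4, w_3 = v_3+v_4, w_4 = v_4, and the pair of admissible topologies T(1)={1,3}, T(2)={2,3}, T(3)={3}, T(4)={4} ≺ T'(i)={i,...,4}: if f ∈ Nil_{T,T'}(V) has matrix entries f v_1 = a v_2 + b v_4, f v_2 = c v_4, f v_3 = d v_4, then g = φ_W⁻¹(φ_V(f)) satisfies g w_1 = (a-1) w_2 + (-a+b+ad) w_4, g w_2 = (c+d-1) w_4, g w_3 = (d-1) w_4. In particular the change of coordinates φ_W⁻¹∘φ_V is not affine in f. -/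
/-!
Each value `g (w i)` is pinned down by one of the flag conditions: `(1 + g) (w i)` lies in the
image under `1 + f` of the matching `V`-subspace, and comparing `v`-coordinates solves for the
unknown coefficients of `g (w i)`. The quadratic term `a * e` arises because the preimage of
`(1 + g) w₁` has `v₃`-coefficient `a`, which `f` multiplies by `e`. An affine map `F` satisfies
`F (p + q) + F 0 = F p + F q`, which the term `p 0 * p 3` violates at the unit vectors
`p = Pi.single 0 1`, `q = Pi.single 3 1`.
-/

noncomputable section
open Submodule

/-- The standard basis `v₁,…,v₄` of `ℝ⁴`. -/
def vb : Fin 4 → (Fin 4 → ℝ) := fun i => Pi.single i 1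

/-- The basis `w₁ = v₁+v₂+v₃+v₄`, `w₂ = v₂+v₃+v₄`, `w₃ = v₃+v₄`, `w₄ = v₄`. -/
def wb : Fin 4 → (Fin 4 → ℝ)
  | 0 => vb 0 + vb 1 + vb 2 + vb 3
  | 1 => vb 1 + vb 2 + vb 3
  | 2 => vb 2 + vb 3
  | 3 => vb 3

section
variable {R M N : Type*} [Semiring R] [AddCommMonoid M] [Module R M] [AddCommMonoid N]
  [Module R N] {φ ψ : M →ₗ[R] N} {U : Submodule R M} {x : M}

theorem exists_eq_smul_of_map_eq_map_span_singleton {u : M}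
    (h : U.map φ = (span R {u}).map ψ) (hx : x ∈ U) : ∃ s : R, φ x = s • ψ u := by
  have hφx : φ x ∈ (span R {u}).map ψ := h ▸ mem_map_of_mem hx
  rw [map_span, Set.image_singleton, mem_span_singleton] at hφx
  exact hφx.imp fun _ hs => hs.symm

theorem exists_eq_smul_add_smul_of_map_eq_map_span_pair {u v : M}
    (h : U.map φ = (span R {u, v}).map ψ) (hx : x ∈ U) :
    ∃ s t : R, φ x = s • ψ u + t • ψ v := by
  have hφx : φ x ∈ (span R {u, v}).map ψ := h ▸ mem_map_of_mem hx
  rw [map_span, Set.image_pair, mem_span_pair] at hφx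
  exact hφx.imp fun _ ⟨t, ht⟩ => ⟨t, ht.symm⟩

end

theorem apply_add_add_apply_zero_of_eq_linear_add {R M N : Type*} [Semiring R]
    [AddCommMonoid M] [Module R M] [AddCommGroup N] [Module R N] {F : M → N} {A : M →ₗ[R] N}
    {B : N} (hF : ∀ p, F p = A p + B) (p q : M) : F (p + q) + F 0 = F p + F q := by
  simp only [hF, map_add, map_zero]
  abel

section
variable {f g : Module.End ℝ (Fin 4 → ℝ)} {a b c e : ℝ}

theorem apply_wb_two_of_map_eq (hf2 : f (vb 2) = e • vb 3) (hg2 : g (wb 2) ∈ span ℝ {wb 3})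
    (h2 : map (1 + g) (span ℝ {wb 2}) = map (1 + f) (span ℝ {vb 2})) :
    g (wb 2) = (e - 1) • wb 3 := by
  obtain ⟨δ, hδ⟩ := mem_span_singleton.mp hg2
  obtain ⟨s, hs⟩ := exists_eq_smul_of_map_eq_map_span_singleton h2 (mem_span_singleton_self _)
  simp only [LinearMap.add_apply, Module.End.one_apply, hf2, ← hδ] at hs
  rw [← hδ]
  have h₂ := congrFun hs 2
  have h₃ := congrFun hs 3
  simp only [wb, vb, Pi.add_apply, Pi.smul_apply, Pi.single_apply, smul_eq_mul, Fin.reduceEq,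
    ↓reduceIte, mul_one, mul_zero, add_zero, zero_add] at h₂ h₃
  rw [show δ = e - 1 by subst h₂; linarith]

theorem apply_wb_one_of_map_eq (hf1 : f (vb 1) = c • vb 3) (hf2 : f (vb 2) = e • vb 3)
    (hg1 : g (wb 1) ∈ span ℝ {wb 3})
    (h12 : map (1 + g) (span ℝ {wb 1, wb 2}) = map (1 + f) (span ℝ {vb 1, vb 2})) :
    g (wb 1) = (c + e - 1) • wb 3 := by
  obtain ⟨γ, hγ⟩ := mem_span_singleton.mp hg1
  obtain ⟨s, t, hst⟩ :=
    exists_eq_smul_add_smul_of_map_eq_map_span_pair h12 (subset_span (Set.mem_insert _ _))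
  simp only [LinearMap.add_apply, Module.End.one_apply, hf1, hf2, ← hγ] at hst
  rw [← hγ]
  have h₁ := congrFun hst 1
  have h₂ := congrFun hst 2
  have h₃ := congrFun hst 3
  simp only [wb, vb, Pi.add_apply, Pi.smul_apply, Pi.single_apply, smul_eq_mul, smul_add,
    Fin.reduceEq, ↓reduceIte, mul_one, mul_zero, add_zero, zero_add] at h₁ h₂ h₃
  rw [show γ = c + e - 1 by subst h₁ h₂; linarith]

theorem apply_wb_zero_of_map_eq (hf0 : f (vb 0) = a • vb 1 + b • vb 3)
    (hf2 : f (vb 2) = e • vb 3) (hg0 : g (wb 0) ∈ span ℝ {wb 1, wb 3})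
    (h02 : map (1 + g) (span ℝ {wb 0, wb 2}) = map (1 + f) (span ℝ {vb 0, vb 2})) :
    g (wb 0) = (a - 1) • wb 1 + (-a + b + a * e) • wb 3 := by
  obtain ⟨α, β, hαβ⟩ := mem_span_pair.mp hg0
  obtain ⟨s, t, hst⟩ :=
    exists_eq_smul_add_smul_of_map_eq_map_span_pair h02 (subset_span (Set.mem_insert _ _))
  simp only [LinearMap.add_apply, Module.End.one_apply, hf0, hf2, ← hαβ] at hst
  rw [← hαβ]
  have h₀ := congrFun hst 0
  have h₁ := congrFun hst 1
  have h₂ := congrFun hst 2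
  have h₃ := congrFun hst 3
  simp only [wb, vb, Pi.add_apply, Pi.smul_apply, Pi.single_apply, smul_eq_mul, smul_add,
    Fin.reduceEq, ↓reduceIte, mul_one, mul_zero, add_zero, zero_add] at h₀ h₁ h₂ h₃
  subst h₀ h₂
  obtain rfl : α = a - 1 := by linarith
  rw [show β = -a + b + a * e by linarith]

end

/-- For `N = 4`, multiplicities all `1`, splittings `V_i = span v_i`,
`W_i = span w_i`, and the admissible topologies `T` with atoms `{1,3},{2,3},{3},{4}` and
`T'` with atoms `{i,…,4}`: if `f ∈ Nil_{T,T'}(V)` has `f v₁ = a v₂ + b v₄`,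
`f v₂ = c v₄`, `f v₃ = d v₄`, then `g = φ_W⁻¹(φ_V(f))` satisfies
`g w₁ = (a-1) w₂ + (-a+b+ad) w₄`, `g w₂ = (c+d-1) w₄`, `g w₃ = (d-1) w₄`.
In particular the change of coordinates is not affine in `f`. -/
theorem non_affine_change_of_coordinates :
    (∀ (a b c e : ℝ) (f g : Module.End ℝ (Fin 4 → ℝ)),
      -- `f ∈ Nil_{T,T'}(V)` with the given matrix entries
      f (vb 0) = a • vb 1 + b • vb 3 → f (vb 1) = c • vb 3 →
      f (vb 2) = e • vb 3 → f (vb 3) = 0 →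
      -- `g ∈ Nil_{T,T'}(W)`
      g (wb 0) ∈ span ℝ {wb 1, wb 3} → g (wb 1) ∈ span ℝ {wb 3} →
      g (wb 2) ∈ span ℝ {wb 3} → g (wb 3) = 0 →
      -- `φ_W(g) = φ_V(f)`, i.e. `g = φ_W⁻¹(φ_V(f))`
      map (1 + g) (span ℝ {wb 3}) = map (1 + f) (span ℝ {vb 3}) →
      map (1 + g) (span ℝ {wb 2}) = map (1 + f) (span ℝ {vb 2}) →
      map (1 + g) (span ℝ {wb 1, wb 2}) = map (1 + f) (span ℝ {vb 1, vb 2}) →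
      map (1 + g) (span ℝ {wb 0, wb 2}) = map (1 + f) (span ℝ {vb 0, vb 2}) →
      g (wb 0) = (a - 1) • wb 1 + (-a + b + a * e) • wb 3 ∧
        g (wb 1) = (c + e - 1) • wb 3 ∧
        g (wb 2) = (e - 1) • wb 3) ∧
    -- in particular, the coordinate change `(a,b,c,d) ↦ (a-1, -a+b+ad, c+d-1, d-1)`
    -- is not affine
    ¬ ∃ (A : (Fin 4 → ℝ) →ₗ[ℝ] (Fin 4 → ℝ)) (B : Fin 4 → ℝ),
        ∀ p : Fin 4 → ℝ,
          ![p 0 - 1, -p 0 + p 1 + p 0 * p 3, p 2 + p 3 - 1, p 3 - 1] = A p + B := by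
  refine ⟨fun a b c e f g hf0 hf1 hf2 _ hg0 hg1 hg2 _ _ h2 h12 h02 =>
    ⟨apply_wb_zero_of_map_eq hf0 hf2 hg0 h02, apply_wb_one_of_map_eq hf1 hf2 hg1 h12,
      apply_wb_two_of_map_eq hf2 hg2 h2⟩, ?_⟩
  rintro ⟨A, B, hAB⟩
  have h := congrFun (apply_add_add_apply_zero_of_eq_linear_add hAB
    (Pi.single 0 1) (Pi.single 3 1)) 1
  simp at h

end
end

section
/- For N = 3, d = 3, multiplicities d_1=d_2=d_3=1, and the admissible topologies T with atoms {1,3},{2},{3} and T' with atoms {1,2,3},{2,3},{3}: for any two splittings V, W compatible with the same x' ∈ X_{T'}, the change of coordinates φ_W⁻¹∘φ_V : Nil_{T,T'}(V) → Nil_{T,T'}(W) is affine. Explicitly, choosing bases v_i of V_i and w_1 = v_1 + α v_2 + β v_3, w_2 = v_2 + γ v_3, w_3 = v_3 of W_i, if f v_1 = a v_2, f v_2 = b v_3, f v_3 = 0 then g = φ_W⁻¹(φ_V(f)) satisfies g w_1 = (a-α) w_2, g w_2 = (b-γ) w_3, g w_3 = 0. -/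
/-!
The equalities `φ_W(g) = φ_V(f)` put `(1 + g) (w 1)` in the span of `(1 + f) (v 1) = v 1 + b • v 2`,
and `(1 + g) (w 0)` in the span of `(1 + f) (v 0) = v 0 + a • v 1` and `v 2`. Writing
`g (w 1) = c • w 2` and `g (w 0) = s • w 1` and comparing coordinates in the basis `v` gives
`γ + c = b` and `α + s = a`.
-/

noncomputable section
open Submodule

theorem eq_of_add_smul_add_smul_mem_span_pair {R M : Type*} [CommRing R] [AddCommGroup M]
    [Module R M] {u x y : M} (h : LinearIndependent R ![u, x, y]) {s r t : R}
    (hmem : u + s • x + r • y ∈ span R {u + t • x, y}) : s = t := by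
  obtain ⟨p, q, hpq⟩ := mem_span_pair.mp hmem
  have hcoeff := Fintype.linearIndependent_iff.mp h ![p - 1, p * t - s, q - r] <| by
    rw [Fin.sum_univ_three]
    simp only [Matrix.cons_val_zero, Matrix.cons_val_one, Matrix.cons_val_two,
      Matrix.head_cons, Matrix.tail_cons]
    rw [← sub_eq_zero.mpr hpq]
    module
  have hp : p - 1 = 0 := hcoeff 0
  have hpt : p * t - s = 0 := hcoeff 1
  rw [sub_eq_zero.mp hp, one_mul] at hpt
  exact (sub_eq_zero.mp hpt).symm

theorem add_apply_mem_span_image_of_map_eq {R M : Type*} [Ring R] [AddCommGroup M] [Module R M]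
    {f g : Module.End R M} {s t : Set M} (h : map (1 + g) (span R s) = map (1 + f) (span R t))
    {x : M} (hx : x ∈ s) : x + g x ∈ span R (⇑(1 + f) '' t) := by
  have hmem := mem_map_of_mem (f := 1 + g) (subset_span hx)
  rwa [h, map_span] at hmem

theorem dimension_three_affine_change_of_coordinates_general
    (v : Fin 3 → (Fin 3 → ℝ)) (hv : LinearIndependent ℝ v)
    (α β γ a b : ℝ) (w : Fin 3 → (Fin 3 → ℝ))
    (hw0 : w 0 = v 0 + α • v 1 + β • v 2)
    (hw1 : w 1 = v 1 + γ • v 2) (hw2 : w 2 = v 2)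
    (f g : Module.End ℝ (Fin 3 → ℝ))
    -- `f ∈ Nil_{T,T'}(V)` with matrix entries `a, b`
    (hf0 : f (v 0) = a • v 1) (hf1 : f (v 1) = b • v 2) (hf2 : f (v 2) = 0)
    -- `g ∈ Nil_{T,T'}(W)`
    (hg0 : g (w 0) ∈ span ℝ {w 1}) (hg1 : g (w 1) ∈ span ℝ {w 2}) (hg2 : g (w 2) = 0)
    -- `φ_W(g) = φ_V(f)`, over the atoms `{3}`, `{2}`, `{1,3}` of `T`
    (h2 : map (1 + g) (span ℝ {w 1}) = map (1 + f) (span ℝ {v 1}))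
    (h13 : map (1 + g) (span ℝ {w 0, w 2}) = map (1 + f) (span ℝ {v 0, v 2})) :
    g (w 0) = (a - α) • w 1 ∧ g (w 1) = (b - γ) • w 2 ∧ g (w 2) = 0 := by
  obtain ⟨c, hc⟩ := mem_span_singleton.mp hg1
  obtain ⟨s, hs⟩ := mem_span_singleton.mp hg0
  have hv012 : LinearIndependent ℝ ![v 0, v 1, v 2] := by
    convert hv using 1; ext i; fin_cases i <;> rfl
  have hv120 : LinearIndependent ℝ ![v 1, v 2, v 0] := by
    convert hv.comp _ (finRotate 3).injective using 1; ext i; fin_cases i <;> rfl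
  have hcb : γ + c = b := by
    have hmem := add_apply_mem_span_image_of_map_eq h2 (Set.mem_singleton (w 1))
    rw [Set.image_singleton, ← hc, hw1, hw2] at hmem
    simp only [LinearMap.add_apply, Module.End.one_apply, hf1] at hmem
    refine eq_of_add_smul_add_smul_mem_span_pair hv120 (r := 0) <|
      span_mono (Set.singleton_subset_iff.mpr (Set.mem_insert _ _)) ?_
    convert hmem using 1
    module
  have hsa : α + s = a := by
    have hmem := add_apply_mem_span_image_of_map_eq h13 (Set.mem_insert (w 0) _)
    rw [Set.image_pair, ← hs, hw0, hw1] at hmem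
    simp only [LinearMap.add_apply, Module.End.one_apply, hf0, hf2, add_zero] at hmem
    refine eq_of_add_smul_add_smul_mem_span_pair hv012 (r := β + s * γ) ?_
    convert hmem using 1
    module
  refine ⟨?_, ?_, hg2⟩
  · rw [← hs, ← hsa, add_sub_cancel_left]
  · rw [← hc, ← hcb, add_sub_cancel_left]

/-- For `N = d = 3`, multiplicities all `1`, and the admissible
topologies `T` with atoms `{1,3},{2},{3}` and `T'` with atoms `{1,2,3},{2,3},{3}`:
the change of coordinates between any two compatible splittings is affine.  Explicitly,
with bases `v_i` of `V_i` and `w₁ = v₁ + α v₂ + β v₃`, `w₂ = v₂ + γ v₃`, `w₃ = v₃` of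
`W_i`, if `f v₁ = a v₂`, `f v₂ = b v₃`, `f v₃ = 0`, then `g = φ_W⁻¹(φ_V(f))` satisfies
`g w₁ = (a-α) w₂`, `g w₂ = (b-γ) w₃`, `g w₃ = 0`. -/
theorem dimension_three_affine_change_of_coordinates
    (v : Fin 3 → (Fin 3 → ℝ)) (hv : LinearIndependent ℝ v)
    (hvtop : span ℝ (Set.range v) = ⊤)
    (α β γ a b : ℝ) (w : Fin 3 → (Fin 3 → ℝ))
    (hw0 : w 0 = v 0 + α • v 1 + β • v 2)
    (hw1 : w 1 = v 1 + γ • v 2) (hw2 : w 2 = v 2)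
    (f g : Module.End ℝ (Fin 3 → ℝ))
    -- `f ∈ Nil_{T,T'}(V)` with matrix entries `a, b`
    (hf0 : f (v 0) = a • v 1) (hf1 : f (v 1) = b • v 2) (hf2 : f (v 2) = 0)
    -- `g ∈ Nil_{T,T'}(W)`
    (hg0 : g (w 0) ∈ span ℝ {w 1}) (hg1 : g (w 1) ∈ span ℝ {w 2}) (hg2 : g (w 2) = 0)
    -- `φ_W(g) = φ_V(f)`, over the atoms `{3}`, `{2}`, `{1,3}` of `T`
    (h3 : map (1 + g) (span ℝ {w 2}) = map (1 + f) (span ℝ {v 2}))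
    (h2 : map (1 + g) (span ℝ {w 1}) = map (1 + f) (span ℝ {v 1}))
    (h13 : map (1 + g) (span ℝ {w 0, w 2}) = map (1 + f) (span ℝ {v 0, v 2})) :
    g (w 0) = (a - α) • w 1 ∧ g (w 1) = (b - γ) • w 2 ∧ g (w 2) = 0 :=
  dimension_three_affine_change_of_coordinates_general v hv α β γ a b w hw0 hw1 hw2 f g hf0 hf1 hf2
    hg0 hg1 hg2 h2 h13

end
end

section
/- For N = 2, multiplicities d_1 = 1, d_2 = 2 in ℝ³, the configuration space X_{T_1} of pairs (L,P) of a line L and a plane P in ℝ³ in general position (L ⊄ P), projected to P, is a fiber bundle over the projective plane homeomorphic to the tangent bundle of P(ℝ³): the map sending (L,P) to the unique tangent vector v at the point L' = P^⊥ ∈ P(ℝ³) with ‖v‖ < π/2 and exp_{L'}(v) = L is a homeomorphism onto the disc bundle of radius π/2, commuting with the projections. -/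
noncomputable section
open Submodule Module

/-- The orthogonal projection onto a subspace of `ℝ³`, as an operator `ℝ³ → ℝ³`. -/
def projOp3 (U : Submodule ℝ (EuclideanSpace ℝ (Fin 3))) :
    EuclideanSpace ℝ (Fin 3) →L[ℝ] EuclideanSpace ℝ (Fin 3) :=
  U.subtypeL.comp (orthogonalProjection U)

/-- The Grassmannian topology on the set of subspaces of `ℝ³`, induced by the
operator-norm distance between orthogonal projections. -/
instance : TopologicalSpace (Submodule ℝ (EuclideanSpace ℝ (Fin 3))) :=
  TopologicalSpace.induced projOp3 inferInstance

/-- The configuration space `X_{T₁}`: pairs `(L, P)` of a line `L` and a plane `P` in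
`ℝ³` in general position (`L + P = ℝ³`, i.e. `L ⊄ P`). -/
def ConfigLP : Type :=
  {q : Submodule ℝ (EuclideanSpace ℝ (Fin 3)) × Submodule ℝ (EuclideanSpace ℝ (Fin 3)) //
    finrank ℝ q.1 = 1 ∧ finrank ℝ q.2 = 2 ∧ q.1 ⊔ q.2 = ⊤}

instance : TopologicalSpace ConfigLP :=
  instTopologicalSpaceSubtype

/-- A model of the tangent bundle of the projective plane `P(ℝ³)`: pairs `(L', A)` of a
line `L'` (a point of `P(ℝ³)`) and an operator `A` with `A = π_{L'ᗮ} ∘ A ∘ π_{L'}`,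
i.e. a linear map `L' → L'ᗮ ≅ T_{L'} P(ℝ³)`. -/
def TangentPR3 : Type :=
  {q : Submodule ℝ (EuclideanSpace ℝ (Fin 3)) ×
      (EuclideanSpace ℝ (Fin 3) →L[ℝ] EuclideanSpace ℝ (Fin 3)) //
    finrank ℝ q.1 = 1 ∧ q.2 = (projOp3 q.1ᗮ).comp (q.2.comp (projOp3 q.1))}

instance : TopologicalSpace TangentPR3 :=
  instTopologicalSpaceSubtype

/-!
A line `L` not contained in the plane `P` is the graph of a unique linear map `A : Pᗮ → P`, and
`T_ℓ P(ℝ³) = Hom(ℓ, ℓᗮ)`, so `(L, P) ↦ (Pᗮ, A)` identifies `X_{T₁}` with the tangent bundle of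
`P(ℝ³)`. Both directions are continuous for the Grassmannian topology because they are rational in
the orthogonal projections: if `Pᗮ = ℝu` and `L = ℝw`, then `π_P π_L π_{Pᗮ}` and `π_L π_{Pᗮ}` are
rank one with ratio `A = ⟪u, w⟫⁻¹ w ⊗ u - u ⊗ u`, and conversely `π_L = B B* / tr (B B*)` for the
rank-one map `B = π_{Pᗮ} + A` with range `L`.
-/

open InnerProductSpace RealInnerProductSpace ContinuousLinearMap

section RankOne

variable {E : Type*} [NormedAddCommGroup E] [InnerProductSpace ℝ E]

theorem exists_norm_eq_one_span_eq {K : Submodule ℝ E} (h : finrank ℝ K = 1) :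
    ∃ u : E, ‖u‖ = 1 ∧ K = ℝ ∙ u := by
  have : Module.Finite ℝ K := Module.finite_of_finrank_eq_succ h
  obtain ⟨⟨v, rfl⟩⟩ := K.finrank_le_one_iff_isPrincipal.mp h.le
  have hv : v ≠ 0 := by
    rintro rfl
    rw [span_zero_singleton, finrank_bot] at h
    exact zero_ne_one h
  exact ⟨‖v‖⁻¹ • v, norm_smul_inv_norm hv,
    (span_singleton_smul_eq (inv_ne_zero (norm_ne_zero_iff.mpr hv)).isUnit v).symm⟩

theorem starProjection_span_singleton_eq_rankOne (w : E) :
    (ℝ ∙ w).starProjection = (‖w‖ ^ 2)⁻¹ • rankOne ℝ w w := by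
  ext x
  rw [starProjection_singleton, smul_apply, rankOne_apply, smul_smul, div_eq_inv_mul,
    real_inner_comm]
  rfl

theorem starProjection_span_add_rankOne {u : E} (hu : ‖u‖ = 1) (v : E) :
    (ℝ ∙ u).starProjection + rankOne ℝ v u = rankOne ℝ (u + v) u := by
  rw [starProjection_span_singleton_eq_rankOne, hu, one_pow, inv_one, one_smul, map_add,
    add_apply]

theorem inner_add_eq_one {u v : E} (hu : ‖u‖ = 1) (huv : ⟪u, v⟫ = 0) : ⟪u, u + v⟫ = 1 := by
  rw [inner_add_right, huv, real_inner_self_eq_norm_sq, hu, one_pow, add_zero]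

theorem range_rankOne {y : E} (hy : y ≠ 0) (x : E) :
    LinearMap.range (rankOne ℝ x y).toLinearMap = ℝ ∙ x := by
  rw [toLinearMap_rankOne]
  refine LinearMap.range_smulRight_apply (fun h => hy ?_) x
  simpa using LinearMap.congr_fun h y

theorem eq_orthogonal_comp_comp_span_iff {u : E} (hu : ‖u‖ = 1) (A : E →L[ℝ] E) :
    A = (ℝ ∙ u)ᗮ.starProjection ∘L A ∘L (ℝ ∙ u).starProjection ↔
      ∃ v, ⟪u, v⟫ = 0 ∧ A = rankOne ℝ v u := by
  have hcomp : (ℝ ∙ u)ᗮ.starProjection ∘L A ∘L (ℝ ∙ u).starProjection =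
      rankOne ℝ (A u - ⟪u, A u⟫ • u) u := by
    rw [starProjection_orthogonal', starProjection_span_singleton_eq_rankOne, hu, one_pow,
      inv_one, one_smul, comp_rankOne, comp_rankOne]
    simp
  rw [hcomp]
  constructor
  · intro h
    refine ⟨_, ?_, h⟩
    rw [inner_sub_right, real_inner_smul_right, real_inner_self_eq_norm_sq, hu]
    ring
  · rintro ⟨v, hv, rfl⟩
    simp [hu, hv]

variable [FiniteDimensional ℝ E]

theorem span_sup_orthogonal_eq_top_iff {u : E} (hu : u ≠ 0) (w : E) :
    (ℝ ∙ w) ⊔ (ℝ ∙ u)ᗮ = ⊤ ↔ ⟪u, w⟫ ≠ 0 := by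
  rw [← orthogonal_eq_bot_iff, ← inf_orthogonal, orthogonal_orthogonal, ← disjoint_iff,
    disjoint_span_singleton' hu, mem_orthogonal_singleton_iff_inner_right, real_inner_comm]

theorem continuous_trace : Continuous fun T : E →L[ℝ] E => LinearMap.trace ℝ E T :=
  (LinearMap.trace ℝ E ∘ₗ coeLM ℝ).continuous_of_finiteDimensional

theorem trace_starProjection_span_comp (u w : E) :
    LinearMap.trace ℝ E ((ℝ ∙ w).starProjection ∘L (ℝ ∙ u).starProjection) =
      ⟪u, w⟫ ^ 2 / (‖u‖ ^ 2 * ‖w‖ ^ 2) := by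
  rw [starProjection_span_singleton_eq_rankOne, starProjection_span_singleton_eq_rankOne]
  simp only [comp_smul, smul_comp, rankOne_comp_rankOne, toLinearMap_smul, map_smul, smul_eq_mul]
  rw [trace_rankOne, real_inner_comm w u]
  field_simp

theorem trace_rankOne_comp_adjoint (x y : E) :
    LinearMap.trace ℝ E (rankOne ℝ x y ∘L adjoint (rankOne ℝ x y)) = ‖x‖ ^ 2 * ‖y‖ ^ 2 := by
  rw [adjoint_rankOne, rankOne_comp_rankOne, toLinearMap_smul, map_smul, trace_rankOne,
    real_inner_self_eq_norm_sq, real_inner_self_eq_norm_sq, smul_eq_mul, mul_comm]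

theorem starProjection_range_rankOne (x : E) {y : E} (hy : y ≠ 0) :
    (LinearMap.range (rankOne ℝ x y).toLinearMap).starProjection =
      (LinearMap.trace ℝ E (rankOne ℝ x y ∘L adjoint (rankOne ℝ x y)))⁻¹ •
        (rankOne ℝ x y ∘L adjoint (rankOne ℝ x y)) := by
  have hy' : ‖y‖ ^ 2 ≠ 0 := by positivity
  simp only [range_rankOne hy]
  rw [starProjection_span_singleton_eq_rankOne, trace_rankOne_comp_adjoint, adjoint_rankOne,
    rankOne_comp_rankOne, real_inner_self_eq_norm_sq, smul_smul, mul_inv, mul_assoc,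
    inv_mul_cancel₀ hy', mul_one]

end RankOne

section GraphOp

variable {E : Type*} [NormedAddCommGroup E] [InnerProductSpace ℝ E] [FiniteDimensional ℝ E]

/-- The linear map `Pᗮ → P` whose graph is `L`, extended by zero on `P`. -/
def graphOp (L P : Submodule ℝ E) : E →L[ℝ] E :=
  (LinearMap.trace ℝ E (L.starProjection ∘L Pᗮ.starProjection))⁻¹ •
    (P.starProjection ∘L L.starProjection ∘L Pᗮ.starProjection)

theorem graphOp_span_orthogonal {u w : E} (hu : ‖u‖ = 1) (huw : ⟪u, w⟫ ≠ 0) :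
    graphOp (ℝ ∙ w) (ℝ ∙ u)ᗮ = rankOne ℝ (⟪u, w⟫⁻¹ • w - u) u := by
  have hw : ‖w‖ ≠ 0 := by
    intro h
    simp [norm_eq_zero.mp h] at huw
  simp only [graphOp, orthogonal_orthogonal]
  rw [trace_starProjection_span_comp, starProjection_orthogonal', hu]
  ext x
  simp [starProjection_unit_singleton ℝ hu, starProjection_singleton, real_inner_smul_right]
  rw [real_inner_comm u w]
  match_scalars <;> field_simp

variable {X : Type*} [TopologicalSpace X]

theorem Continuous.starProjection_orthogonal {P : X → Submodule ℝ E}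
    (hP : Continuous fun t => (P t).starProjection) :
    Continuous fun t => (P t)ᗮ.starProjection := by
  simp only [starProjection_orthogonal']
  exact continuous_const.sub hP

theorem Continuous.graphOp {L P : X → Submodule ℝ E}
    (hL : Continuous fun t => (L t).starProjection) (hP : Continuous fun t => (P t).starProjection)
    (h0 : ∀ t, LinearMap.trace ℝ E ((L t).starProjection ∘L (P t)ᗮ.starProjection) ≠ 0) :
    Continuous fun t => graphOp (L t) (P t) := by
  have hLP := hL.clm_comp hP.starProjection_orthogonal
  exact ((continuous_trace.comp hLP).inv₀ h0).smul (hP.clm_comp hLP)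

theorem Continuous.starProjection_range {B : X → E →L[ℝ] E} (hB : Continuous B)
    (h1 : ∀ t, ∃ x y, x ≠ 0 ∧ y ≠ 0 ∧ B t = rankOne ℝ x y) :
    Continuous fun t => (LinearMap.range (B t).toLinearMap).starProjection := by
  have hBB := hB.clm_comp ((adjoint (𝕜 := ℝ) (E := E) (F := E)).continuous.comp hB)
  have key : ∀ t, (LinearMap.range (B t).toLinearMap).starProjection =
        (LinearMap.trace ℝ E (B t ∘L adjoint (B t)))⁻¹ • (B t ∘L adjoint (B t)) ∧
      LinearMap.trace ℝ E (B t ∘L adjoint (B t)) ≠ 0 := by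
    intro t
    obtain ⟨x, y, hx, hy, hBt⟩ := h1 t
    simp only [hBt, starProjection_range_rankOne x hy, trace_rankOne_comp_adjoint, true_and]
    positivity
  simp only [fun t => (key t).1]
  exact ((continuous_trace.comp hBB).inv₀ fun t => (key t).2).smul hBB

end GraphOp

local notation "E3" => EuclideanSpace ℝ (Fin 3)

theorem projOp3_eq_starProjection (U : Submodule ℝ E3) : projOp3 U = U.starProjection := rfl

theorem continuous_starProjection : Continuous fun U : Submodule ℝ E3 => U.starProjection :=
  continuous_induced_dom

theorem ConfigLP.exists_eq_span (x : ConfigLP) :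
    ∃ u w : E3, ‖u‖ = 1 ∧ ⟪u, w⟫ ≠ 0 ∧ x.1 = (ℝ ∙ w, (ℝ ∙ u)ᗮ) := by
  obtain ⟨⟨L, P⟩, hL, hP, hLP⟩ := x
  obtain ⟨u, hu, hPu⟩ := exists_norm_eq_one_span_eq
    (finrank_add_finrank_orthogonal' (by simp [hP]) : finrank ℝ Pᗮ = 1)
  obtain ⟨w, -, rfl⟩ := exists_norm_eq_one_span_eq hL
  obtain rfl : P = (ℝ ∙ u)ᗮ := by rw [← hPu, orthogonal_orthogonal]
  have hu0 : u ≠ 0 := ne_zero_of_norm_ne_zero (by simp [hu])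
  exact ⟨u, w, hu, (span_sup_orthogonal_eq_top_iff hu0 w).mp hLP, rfl⟩

theorem TangentPR3.exists_eq_rankOne (y : TangentPR3) :
    ∃ u v : E3, ‖u‖ = 1 ∧ ⟪u, v⟫ = 0 ∧ y.1 = (ℝ ∙ u, rankOne ℝ v u) := by
  obtain ⟨⟨L, A⟩, hL, hA⟩ := y
  obtain ⟨u, hu, rfl⟩ := exists_norm_eq_one_span_eq hL
  obtain ⟨v, hv, rfl⟩ := (eq_orthogonal_comp_comp_span_iff hu A).mp hA
  exact ⟨u, v, hu, hv, rfl⟩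

def ConfigLP.toTangent (x : ConfigLP) : TangentPR3 :=
  ⟨(x.1.2ᗮ, graphOp x.1.1 x.1.2), by
    obtain ⟨u, w, hu, huw, hx⟩ := x.exists_eq_span
    rw [hx, orthogonal_orthogonal, graphOp_span_orthogonal hu huw]
    refine ⟨finrank_span_singleton (ne_zero_of_norm_ne_zero (by simp [hu])),
      (eq_orthogonal_comp_comp_span_iff hu _).mpr ⟨_, ?_, rfl⟩⟩
    rw [inner_sub_right, real_inner_smul_right, inv_mul_cancel₀ huw, real_inner_self_eq_norm_sq,
      hu]
    norm_num⟩

def TangentPR3.toConfig (y : TangentPR3) : ConfigLP :=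
  ⟨(LinearMap.range (projOp3 y.1.1 + y.1.2).toLinearMap, y.1.1ᗮ), by
    obtain ⟨u, v, hu, huv, hy⟩ := y.exists_eq_rankOne
    have hu0 : u ≠ 0 := ne_zero_of_norm_ne_zero (by simp [hu])
    rw [hy, projOp3_eq_starProjection, starProjection_span_add_rankOne hu, range_rankOne hu0]
    have h1 : ⟪u, u + v⟫ ≠ 0 := by rw [inner_add_eq_one hu huv]; exact one_ne_zero
    exact ⟨finrank_span_singleton (fun h => h1 (by rw [h, inner_zero_right])),
      finrank_add_finrank_orthogonal' (by simp [finrank_span_singleton hu0]),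
      (span_sup_orthogonal_eq_top_iff hu0 _).mpr h1⟩⟩

theorem ConfigLP.toConfig_toTangent (x : ConfigLP) : x.toTangent.toConfig = x := by
  obtain ⟨u, w, hu, huw, hx⟩ := x.exists_eq_span
  apply Subtype.ext
  change (LinearMap.range (projOp3 x.1.2ᗮ + graphOp x.1.1 x.1.2).toLinearMap, x.1.2ᗮᗮ) = x.1
  rw [hx, orthogonal_orthogonal, graphOp_span_orthogonal hu huw, projOp3_eq_starProjection,
    starProjection_span_add_rankOne hu, add_sub_cancel,
    range_rankOne (ne_zero_of_norm_ne_zero (by simp [hu])),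
    span_singleton_smul_eq (inv_ne_zero huw).isUnit]

theorem TangentPR3.toTangent_toConfig (y : TangentPR3) : y.toConfig.toTangent = y := by
  obtain ⟨u, v, hu, huv, hy⟩ := y.exists_eq_rankOne
  apply Subtype.ext
  change (y.1.1ᗮᗮ, graphOp (LinearMap.range (projOp3 y.1.1 + y.1.2).toLinearMap) y.1.1ᗮ) = y.1
  rw [hy, orthogonal_orthogonal, projOp3_eq_starProjection, starProjection_span_add_rankOne hu,
    range_rankOne (ne_zero_of_norm_ne_zero (by simp [hu])),
    graphOp_span_orthogonal hu (by rw [inner_add_eq_one hu huv]; exact one_ne_zero),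
    inner_add_eq_one hu huv, inv_one, one_smul, add_sub_cancel_left]

theorem ConfigLP.trace_ne_zero (x : ConfigLP) :
    LinearMap.trace ℝ E3 (x.1.1.starProjection ∘L x.1.2ᗮ.starProjection) ≠ 0 := by
  obtain ⟨u, w, hu, huw, hx⟩ := x.exists_eq_span
  simp only [hx, orthogonal_orthogonal, trace_starProjection_span_comp, hu]
  have hw : w ≠ 0 := fun h => huw (by rw [h, inner_zero_right])
  positivity

theorem ConfigLP.continuous_toTangent : Continuous ConfigLP.toTangent := by
  have hL : Continuous fun x : ConfigLP => x.1.1.starProjection :=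
    continuous_starProjection.comp (continuous_fst.comp continuous_subtype_val)
  have hP : Continuous fun x : ConfigLP => x.1.2.starProjection :=
    continuous_starProjection.comp (continuous_snd.comp continuous_subtype_val)
  exact ((continuous_induced_rng.2 hP.starProjection_orthogonal).prodMk
    (hL.graphOp hP ConfigLP.trace_ne_zero)).subtype_mk _

theorem TangentPR3.continuous_toConfig : Continuous TangentPR3.toConfig := by
  have hL : Continuous fun y : TangentPR3 => y.1.1.starProjection :=
    continuous_starProjection.comp (continuous_fst.comp continuous_subtype_val)
  have hA : Continuous fun y : TangentPR3 => y.1.2 := continuous_snd.comp continuous_subtype_val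
  have hB : Continuous fun y : TangentPR3 => y.1.1.starProjection + y.1.2 := hL.add hA
  refine ((continuous_induced_rng.2 (hB.starProjection_range fun y => ?_)).prodMk
    (continuous_induced_rng.2 hL.starProjection_orthogonal)).subtype_mk _
  obtain ⟨u, v, hu, huv, hy⟩ := y.exists_eq_rankOne
  refine ⟨u + v, u, fun h => ?_, ne_zero_of_norm_ne_zero (by simp [hu]), ?_⟩
  · simpa [h] using inner_add_eq_one hu huv
  · rw [hy, starProjection_span_add_rankOne hu]

def configLPHomeomorph : ConfigLP ≃ₜ TangentPR3 where
  toFun := ConfigLP.toTangent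
  invFun := TangentPR3.toConfig
  left_inv := ConfigLP.toConfig_toTangent
  right_inv := TangentPR3.toTangent_toConfig
  continuous_toFun := ConfigLP.continuous_toTangent
  continuous_invFun := TangentPR3.continuous_toConfig

/-- For `N = 2`, multiplicities `d₁ = 1`, `d₂ = 2` in `ℝ³`, the
configuration space `X_{T₁}` of pairs `(L,P)` in general position, fibered over the
projective plane by `(L,P) ↦ P` (equivalently, over `P(ℝ³)` via `P ↦ P^⊥`), is
homeomorphic to the tangent bundle of `P(ℝ³)` by a homeomorphism commuting with the
projections: `h (L,P)` is a tangent vector at the point `L' = P^⊥ ∈ P(ℝ³)`. -/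
theorem configLP_homeomorph_tangent_bundle :
    ∃ h : ConfigLP ≃ₜ TangentPR3,
      ∀ x : ConfigLP, (h x).1.1 = (x.1.2)ᗮ :=
  ⟨configLPHomeomorph, fun _ => rfl⟩

end
end

section
/- Let V = (V_1,...,V_N) and E = (E_1,...,E_N) be two splittings of ℝ^d with ⊕_{j≥i}V_j = ⊕_{j≥i}E_j for all i, and suppose additionally each V_i is the orthogonal complement of ⊕_{j>i}E_j inside ⊕_{j≥i}E_j. Then the operator norms of the projections satisfy ‖π_{V_i}‖ ≤ ‖π_{E_i}‖ · ∏_{k<i}(1 + ‖π_{E_k}‖), where π_{V_i}, π_{E_i} are the projections onto V_i, E_i along the complementary sums of the respective splittings. -/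
/-!
The projection `π_{V_i}` vanishes on `V_k` for `k < i`, so it does not see the parts of `x`
along `V_1, …, V_{i-1}`: peeling them off one at a time with `id - π_{V_k}` moves `x` into
`⊕_{j ≥ i} V_j` at a cost of a factor `1 + ‖π_{E_k}‖` each. On `⊕_{j ≥ k} V_j` one has
`‖π_{V_k} y‖ ≤ ‖π_{E_k} y‖`, because `π_{V_k} y` and `π_{E_k} y` differ by a vector of
`⊕_{j > k} E_j`, to which `π_{V_k} y` is orthogonal.
-/

section Lattice

variable {α ι : Type*} [CompleteLattice α] [Preorder ι]

lemma biSup_gt_eq_biSup_gt_biSup_ge (f : ι → α) (i : ι) :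
    ⨆ j > i, f j = ⨆ j > i, ⨆ l ≥ j, f l :=
  le_antisymm (iSup₂_mono fun j _ => le_iSup₂_of_le j le_rfl le_rfl)
    (iSup₂_le fun _ hj => iSup₂_le fun l hl => le_iSup₂_of_le l (hj.trans_le hl) le_rfl)

lemma biSup_gt_eq_of_biSup_ge_eq {f g : ι → α} (h : ∀ i, ⨆ j ≥ i, f j = ⨆ j ≥ i, g j)
    (i : ι) : ⨆ j > i, f j = ⨆ j > i, g j := by
  simp_rw [biSup_gt_eq_biSup_gt_biSup_ge f, biSup_gt_eq_biSup_gt_biSup_ge g, h]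

end Lattice

def IsProjectionFamily {ι R M F : Type*} [Semiring R] [AddCommMonoid M] [Module R M]
    [FunLike F M M] (W : ι → Submodule R M) (π : ι → F) : Prop :=
  ∀ i, (∀ v ∈ W i, π i v = v) ∧ ∀ j, j ≠ i → ∀ v ∈ W j, π i v = 0

namespace IsProjectionFamily

section Algebra

variable {ι R M F : Type*} [Ring R] [AddCommGroup M] [Module R M] [FunLike F M M]
  [LinearMapClass F R M M] {W : ι → Submodule R M} {π : ι → F}

lemma apply_mem (hπ : IsProjectionFamily W π) (hW : iSup W = ⊤) (i : ι) (x : M) :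
    π i x ∈ W i := by
  refine Submodule.iSup_induction W (motive := fun y => π i y ∈ W i) (hW ▸ Submodule.mem_top)
    (fun j v hv => ?_) (by simp) (fun a b ha hb => by simpa using add_mem ha hb)
  obtain rfl | hji := eq_or_ne j i
  · rwa [(hπ j).1 v hv]
  · rw [(hπ i).2 j hji v hv]
    exact zero_mem _

lemma sub_sum_mem_biSup [DecidableEq ι] (hπ : IsProjectionFamily W π) {p : ι → Prop}
    (s : Finset ι) {y : M} (hy : y ∈ ⨆ j, ⨆ (_ : p j), W j) :
    y - ∑ k ∈ s, π k y ∈ ⨆ j, ⨆ (_ : p j ∧ j ∉ s), W j := by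
  refine Submodule.iSup_induction (fun j => ⨆ (_ : p j), W j)
    (motive := fun z => z - ∑ k ∈ s, π k z ∈ ⨆ j, ⨆ (_ : p j ∧ j ∉ s), W j) hy
    (fun j v hv => ?_) (by simp) (fun a b ha hb => ?_)
  · by_cases hpj : p j
    · rw [iSup_pos hpj] at hv
      have hπv : ∀ k, π k v = if k = j then v else 0 := fun k => by
        split_ifs with hkj
        · subst hkj
          exact (hπ k).1 v hv
        · exact (hπ k).2 j (Ne.symm hkj) v hv
      simp_rw [hπv, Finset.sum_ite_eq']
      split_ifs with hjs
      · simp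
      · simpa using Submodule.mem_iSup_of_mem j (by simpa [hpj, hjs] using hv)
    · simp_all
  · simpa [Finset.sum_add_distrib, add_sub_add_comm] using add_mem ha hb

lemma sub_apply_mem_biSup_gt [PartialOrder ι] [DecidableEq ι] (hπ : IsProjectionFamily W π)
    {i : ι} {y : M} (hy : y ∈ ⨆ j ≥ i, W j) : y - π i y ∈ ⨆ j > i, W j := by
  simpa using biSup_mono (f := W) (p := fun j => i ≤ j ∧ j ∉ ({i} : Finset ι)) (q := (i < ·))
    (fun j ⟨hij, hj⟩ => lt_of_le_of_ne hij (by simpa [eq_comm] using hj))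
    (hπ.sub_sum_mem_biSup {i} hy)

lemma sub_sum_mem_biSup_not_mem [DecidableEq ι] (hπ : IsProjectionFamily W π)
    (hW : iSup W = ⊤) (s : Finset ι) (x : M) :
    x - ∑ k ∈ s, π k x ∈ ⨆ j ∉ s, W j := by
  simpa using hπ.sub_sum_mem_biSup (p := fun _ => True) s (by simp [hW])

lemma apply_sub_sum (hπ : IsProjectionFamily W π) (hW : iSup W = ⊤) {s : Finset ι} {a : ι}
    (ha : a ∉ s) (x : M) : π a (x - ∑ k ∈ s, π k x) = π a x := by
  rw [map_sub, map_sum, Finset.sum_eq_zero, sub_zero]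
  exact fun k hk => (hπ a).2 k (ne_of_mem_of_not_mem hk ha) _ (hπ.apply_mem hW k x)

end Algebra

section Chain

variable {ι 𝕜 X : Type*} [LinearOrder ι] [NontriviallyNormedField 𝕜]
  [SeminormedAddCommGroup X] [NormedSpace 𝕜 X] {W : ι → Submodule 𝕜 X} {π : ι → X →L[𝕜] X}
  {c : ι → ℝ}

lemma norm_sub_sum_le_of_isLowerSet (hπ : IsProjectionFamily W π) (hW : iSup W = ⊤)
    (hc : ∀ k, 0 ≤ c k) (hbound : ∀ a, ∀ y ∈ ⨆ j ≥ a, W j, ‖π a y‖ ≤ c a * ‖y‖)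
    (s : Finset ι) (hs : IsLowerSet (s : Set ι)) (x : X) :
    ‖x - ∑ k ∈ s, π k x‖ ≤ (∏ k ∈ s, (1 + c k)) * ‖x‖ := by
  classical
  induction s using Finset.induction_on_max with
  | empty => simp
  | insert a s hlt ih =>
    have has : a ∉ s := fun h => lt_irrefl a (hlt a h)
    have hmem : ∀ j < a, j ∈ s := fun j hja =>
      (Finset.mem_insert.mp (hs hja.le (Finset.mem_insert_self a s))).resolve_left hja.ne
    have hs' : IsLowerSet (s : Set ι) := fun k j hjk hk => hmem j (hjk.trans_lt (hlt k hk))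
    set y := x - ∑ k ∈ s, π k x with hy_def
    have hy : y ∈ ⨆ j ≥ a, W j :=
      biSup_mono (f := W) (q := (a ≤ ·)) (fun j hjs => not_lt.mp (mt (hmem j) hjs))
        (hπ.sub_sum_mem_biSup_not_mem hW s x)
    have hstep : x - ∑ k ∈ insert a s, π k x = y - π a y := by
      rw [hπ.apply_sub_sum hW has, Finset.sum_insert has, hy_def]
      abel
    calc ‖x - ∑ k ∈ insert a s, π k x‖ ≤ ‖y‖ + c a * ‖y‖ :=
          hstep ▸ (norm_sub_le _ _).trans (add_le_add le_rfl (hbound a y hy))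
      _ = (1 + c a) * ‖y‖ := by ring
      _ ≤ (1 + c a) * ((∏ k ∈ s, (1 + c k)) * ‖x‖) := by
          gcongr
          · linarith [hc a]
          · exact ih hs'
      _ = (∏ k ∈ insert a s, (1 + c k)) * ‖x‖ := by rw [Finset.prod_insert has, mul_assoc]

variable [LocallyFiniteOrderBot ι]

lemma opNorm_le_of_forall_biSup_ge (hπ : IsProjectionFamily W π) (hW : iSup W = ⊤)
    (hc : ∀ k, 0 ≤ c k) (hbound : ∀ a, ∀ y ∈ ⨆ j ≥ a, W j, ‖π a y‖ ≤ c a * ‖y‖) (i : ι) :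
    ‖π i‖ ≤ c i * ∏ k ∈ Finset.Iio i, (1 + c k) := by
  classical
  refine (π i).opNorm_le_bound (mul_nonneg (hc i) (Finset.prod_nonneg fun k _ => by
    linarith [hc k])) fun x => ?_
  have hy : x - ∑ k ∈ Finset.Iio i, π k x ∈ ⨆ j ≥ i, W j :=
    biSup_mono (f := W) (q := (i ≤ ·)) (fun j hj => not_lt.mp (by simpa using hj))
      (hπ.sub_sum_mem_biSup_not_mem hW _ x)
  have hlower : IsLowerSet ((Finset.Iio i : Finset ι) : Set ι) := by
    simpa using isLowerSet_Iio i
  calc ‖π i x‖ = ‖π i (x - ∑ k ∈ Finset.Iio i, π k x)‖ := by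
        rw [hπ.apply_sub_sum hW (by simp)]
    _ ≤ c i * ‖x - ∑ k ∈ Finset.Iio i, π k x‖ := hbound i _ hy
    _ ≤ c i * ((∏ k ∈ Finset.Iio i, (1 + c k)) * ‖x‖) :=
        mul_le_mul_of_nonneg_left
          (norm_sub_sum_le_of_isLowerSet hπ hW hc hbound _ hlower x) (hc i)
    _ = c i * (∏ k ∈ Finset.Iio i, (1 + c k)) * ‖x‖ := (mul_assoc _ _ _).symm

end Chain

end IsProjectionFamily

section InnerProduct

variable {𝕜 X : Type*} [RCLike 𝕜] [NormedAddCommGroup X] [InnerProductSpace 𝕜 X]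

lemma norm_le_of_mem_orthogonal_of_sub_mem {K : Submodule 𝕜 X} {v e : X} (hv : v ∈ Kᗮ)
    (hve : e - v ∈ K) : ‖v‖ ≤ ‖e‖ := by
  have hpyth := norm_add_sq_eq_norm_sq_add_norm_sq_of_inner_eq_zero v (e - v)
    (Submodule.inner_left_of_mem_orthogonal hve hv)
  rw [add_sub_cancel] at hpyth
  nlinarith [norm_nonneg v, norm_nonneg e, mul_self_nonneg ‖e - v‖]

variable {ι : Type*} [PartialOrder ι] [DecidableEq ι] {V E : ι → Submodule 𝕜 X}
  {πV πE : ι → X →L[𝕜] X}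

lemma norm_apply_le_of_le_orthogonal (hπV : IsProjectionFamily V πV)
    (hπE : IsProjectionFamily E πE) (hV : iSup V = ⊤)
    (hVE : ∀ i, ⨆ j ≥ i, V j = ⨆ j ≥ i, E j) (hperp : ∀ i, V i ≤ (⨆ j > i, E j)ᗮ)
    {i : ι} {y : X} (hy : y ∈ ⨆ j ≥ i, E j) : ‖πV i y‖ ≤ ‖πE i y‖ := by
  have hV_tail := hπV.sub_apply_mem_biSup_gt (hVE i ▸ hy)
  rw [biSup_gt_eq_of_biSup_ge_eq hVE] at hV_tail
  refine norm_le_of_mem_orthogonal_of_sub_mem (hperp i (hπV.apply_mem hV i y)) ?_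
  simpa using sub_mem hV_tail (hπE.sub_apply_mem_biSup_gt hy)

end InnerProduct

theorem perp_projection_norm_bound_general {d N : ℕ}
    (V E : Fin N → Submodule ℝ (EuclideanSpace ℝ (Fin d)))
    (hV : DirectSum.IsInternal V)
    (hVE : ∀ i : Fin N, (⨆ j ≥ i, V j) = ⨆ j ≥ i, E j)
    (hperp : ∀ i : Fin N, V i = (⨆ j ≥ i, E j) ⊓ (⨆ j > i, E j)ᗮ)
    (piV piE : Fin N → (EuclideanSpace ℝ (Fin d) →L[ℝ] EuclideanSpace ℝ (Fin d)))
    (hpiV : ∀ i : Fin N, (∀ v ∈ V i, piV i v = v) ∧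
      ∀ j : Fin N, j ≠ i → ∀ v ∈ V j, piV i v = 0)
    (hpiE : ∀ i : Fin N, (∀ v ∈ E i, piE i v = v) ∧
      ∀ j : Fin N, j ≠ i → ∀ v ∈ E j, piE i v = 0) :
    ∀ i : Fin N, ‖piV i‖ ≤ ‖piE i‖ * ∏ k ∈ Finset.Iio i, (1 + ‖piE k‖) := by
  have hV_top : iSup V = ⊤ := hV.submodule_iSup_eq_top
  refine IsProjectionFamily.opNorm_le_of_forall_biSup_ge hpiV hV_top (fun k => norm_nonneg _)
    fun a y hy => ?_
  calc ‖piV a y‖ ≤ ‖piE a y‖ :=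
        norm_apply_le_of_le_orthogonal hpiV hpiE hV_top hVE
          (fun i => (hperp i).trans_le inf_le_right) (hVE a ▸ hy)
    _ ≤ ‖piE a‖ * ‖y‖ := (piE a).le_opNorm y

/-- Let `V` and `E` be two splittings of `ℝ^d` with
`⊕_{j≥i} V j = ⊕_{j≥i} E j` for all `i`, and suppose each `V i` is the orthogonal
complement of `⊕_{j>i} E j` inside `⊕_{j≥i} E j`.  Then the projections (onto `V i`,
resp. `E i`, along the complementary sums of the respective splittings) satisfy
`‖π_{V_i}‖ ≤ ‖π_{E_i}‖ · ∏_{k<i} (1 + ‖π_{E_k}‖)`. -/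
theorem perp_projection_norm_bound {d N : ℕ}
    (V E : Fin N → Submodule ℝ (EuclideanSpace ℝ (Fin d)))
    (hV : DirectSum.IsInternal V) (hE : DirectSum.IsInternal E)
    (hVE : ∀ i : Fin N, (⨆ j ≥ i, V j) = ⨆ j ≥ i, E j)
    (hperp : ∀ i : Fin N, V i = (⨆ j ≥ i, E j) ⊓ (⨆ j > i, E j)ᗮ)
    (piV piE : Fin N → (EuclideanSpace ℝ (Fin d) →L[ℝ] EuclideanSpace ℝ (Fin d)))
    (hpiV : ∀ i : Fin N, (∀ v ∈ V i, piV i v = v) ∧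
      ∀ j : Fin N, j ≠ i → ∀ v ∈ V j, piV i v = 0)
    (hpiE : ∀ i : Fin N, (∀ v ∈ E i, piE i v = v) ∧
      ∀ j : Fin N, j ≠ i → ∀ v ∈ E j, piE i v = 0) :
    ∀ i : Fin N, ‖piV i‖ ≤ ‖piE i‖ * ∏ k ∈ Finset.Iio i, (1 + ‖piE k‖) :=
  perp_projection_norm_bound_general V E hV hVE hperp piV piE hpiV hpiE
end
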